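/- Let G = ⟨a⟩ × ⟨b⟩ be free abelian of rank two and A a Schur ring over G in which {a^i, a^{-i}} is a basic set for every nonzero i and {b, b^{-1}} is a basic set. Then for nonzero integers i, j, the set {a^i b^j, a^i b^{-j}} is not a basic set of A. -/

import Mathlib

noncomputable def simpleQuantity (F : Type*) [Field F] {G : Type*} [Group G]
    (D : Finset G) : MonoidAlgebra F G :=
  ∑ g ∈ D, MonoidAlgebra.single g 1

structure SchurRing (F G : Type*) [Field F] [Group G] where
  parts : Set (Finset G)
  parts_nonempty : ∀ D ∈ parts, D.Nonempty
  cover : ∀ g : G, ∃ D ∈ parts, g ∈ D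
  eq_of_mem : ∀ D₁ ∈ parts, ∀ D₂ ∈ parts, ∀ g : G, g ∈ D₁ → g ∈ D₂ → D₁ = D₂
  one_mem : ({1} : Finset G) ∈ parts
  inv_mem : ∀ D ∈ parts, ∃ D' ∈ parts, ∀ g : G, g ∈ D' ↔ g⁻¹ ∈ D
  mul_mem : ∀ x ∈ Submodule.span F (simpleQuantity F '' parts),
    ∀ y ∈ Submodule.span F (simpleQuantity F '' parts),
    x * y ∈ Submodule.span F (simpleQuantity F '' parts)

noncomputable def SchurRing.span {F G : Type*} [Field F] [Group G] (A : SchurRing F G) :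
    Submodule F (MonoidAlgebra F G) :=
  Submodule.span F (simpleQuantity F '' A.parts)

def SchurRing.IsASet {F G : Type*} [Field F] [Group G] (A : SchurRing F G)
    (S : Set G) : Prop :=
  ∀ D ∈ A.parts, (∃ g ∈ D, g ∈ S) → ↑D ⊆ S

/-- The free abelian group of rank two, written multiplicatively. -/
abbrev Z2 := Multiplicative (ℤ × ℤ)

/-- The first generator `a` of `Z × Z`. -/
def ga : Z2 := Multiplicative.ofAdd (1, 0)

/-- The second generator `b` of `Z × Z`. -/
def gb : Z2 := Multiplicative.ofAdd (0, 1)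

/-!
Squaring `x = a^i b^j + a^i b^{-j}` gives `a^{2i} b^{2j} + a^{2i} b^{-2j} + 2 a^{2i}`, whose
coefficients at `a^{2i}` and `a^{-2i}` are `2` and `0`. If `{a^i b^j, a^i b^{-j}}` were a basic set,
`x²` would lie in the Schur ring, whose elements have constant coefficients on the basic set
`{a^{2i}, a^{-2i}}`; in characteristic zero `2 ≠ 0`.
-/

open MonoidAlgebra

namespace SchurRing

variable {F G : Type*} [Field F]

open Classical in
lemma coeff_simpleQuantity [Group G] (D : Finset G) (g : G) :
    (simpleQuantity F D).coeff g = if g ∈ D then 1 else 0 := by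
  simp [simpleQuantity, coeff_sum, Finsupp.single_apply]

lemma simpleQuantity_mem_span [Group G] (A : SchurRing F G) {D : Finset G} (hD : D ∈ A.parts) :
    simpleQuantity F D ∈ A.span :=
  Submodule.subset_span ⟨D, hD, rfl⟩

lemma coeff_eq_of_mem_span [Group G] (A : SchurRing F G) {D : Finset G} (hD : D ∈ A.parts)
    {g h : G} (hg : g ∈ D) (hh : h ∈ D) {y : MonoidAlgebra F G} (hy : y ∈ A.span) :
    y.coeff g = y.coeff h := by
  classical
  induction hy using Submodule.span_induction with
  | mem x hx =>
    obtain ⟨D', hD', rfl⟩ := hx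
    have hiff : g ∈ D' ↔ h ∈ D' :=
      ⟨fun hg' => A.eq_of_mem D hD D' hD' g hg hg' ▸ hh,
        fun hh' => A.eq_of_mem D hD D' hD' h hh hh' ▸ hg⟩
    rw [coeff_simpleQuantity, coeff_simpleQuantity]
    exact if_congr hiff rfl rfl
  | zero => rfl
  | add x y _ _ ihx ihy => simp only [coeff_add, Finsupp.add_apply, ihx, ihy]
  | smul c x _ ih => simp only [coeff_smul_apply, ih]

lemma simpleQuantity_pair_mul_self [CommGroup G] [DecidableEq G] {u v : G} (huv : u ≠ v) :
    simpleQuantity F {u, v} * simpleQuantity F {u, v} =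
      single (u * u) 1 + single (v * v) 1 + single (u * v) 2 := by
  rw [simpleQuantity, Finset.sum_pair huv]
  simp only [add_mul, mul_add, single_mul_single, one_mul, mul_comm v u]
  rw [show (2 : F) = 1 + 1 from one_add_one_eq_two.symm, single_add]
  abel

theorem pair_not_mem_parts [CommGroup G] [DecidableEq G] [CharZero F] (A : SchurRing F G)
    {u v w : G} (huv : u ≠ v) (hw : {u * v, w} ∈ A.parts)
    (huu : u * u ≠ w) (hvv : v * v ≠ w) (huvw : u * v ≠ w) :
    {u, v} ∉ A.parts := by
  intro hmem
  have hx := A.simpleQuantity_mem_span (F := F) hmem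
  have hsq := A.mul_mem _ hx _ hx
  have hcoeff := A.coeff_eq_of_mem_span hw (g := u * v) (h := w) (by simp) (by simp) hsq
  have hu : u * u ≠ u * v := fun h => huv (mul_left_cancel h)
  have hv : v * v ≠ u * v := fun h => huv (mul_right_cancel h).symm
  rw [simpleQuantity_pair_mul_self huv] at hcoeff
  simp [coeff_add, coeff_single, hu, hv, huu, hvv, huvw] at hcoeff

end SchurRing

lemma ga_zpow (m : ℤ) : ga ^ m = Multiplicative.ofAdd (m, 0) := by
  simp [ga, ← ofAdd_zsmul]

lemma gb_zpow (n : ℤ) : gb ^ n = Multiplicative.ofAdd (0, n) := by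
  simp [gb, ← ofAdd_zsmul]

theorem not_basic_mixed_general {F : Type*} [Field F] [CharZero F] (A : SchurRing F Z2)
    (hai : ∀ i : ℤ, i ≠ 0 → ({ga ^ i, ga ^ (-i)} : Finset Z2) ∈ A.parts) :
    ∀ i j : ℤ, i ≠ 0 → j ≠ 0 →
      ({ga ^ i * gb ^ j, ga ^ i * gb ^ (-j)} : Finset Z2) ∉ A.parts := by
  intro i j hi hj
  have hprod : ga ^ i * gb ^ j * (ga ^ i * gb ^ (-j)) = ga ^ (2 * i) := by
    simp only [ga_zpow, gb_zpow, ← ofAdd_add, Prod.mk_add_mk]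
    congr 2 <;> ring
  have hpart := hprod ▸ hai (2 * i) (by omega)
  refine A.pair_not_mem_parts (w := ga ^ (-(2 * i))) ?_ hpart ?_ ?_ ?_ <;>
    simp only [ga_zpow, gb_zpow, ← ofAdd_add, Prod.mk_add_mk, ne_eq,
      EmbeddingLike.apply_eq_iff_eq, Prod.mk.injEq] <;> omega

/-- If `{a^i, a^{-i}}` (`i ≠ 0`) and `{b, b⁻¹}` are basic sets, then
`{a^i b^j, a^i b^{-j}}` is never a basic set for nonzero `i, j`. -/
theorem not_basic_mixed {F : Type*} [Field F] [CharZero F] (A : SchurRing F Z2)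
    (hai : ∀ i : ℤ, i ≠ 0 → ({ga ^ i, ga ^ (-i)} : Finset Z2) ∈ A.parts)
    (hb : ({gb, gb⁻¹} : Finset Z2) ∈ A.parts) :
    ∀ i j : ℤ, i ≠ 0 → j ≠ 0 →
      ({ga ^ i * gb ^ j, ga ^ i * gb ^ (-j)} : Finset Z2) ∉ A.parts :=
  not_basic_mixed_general A hai
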